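/- Let H be a rooted path on h vertices with root o at one end, G a finite graph, and Δ ≥ 0. Then Σ_{φ ∈ Hom(H,G)} 1[d_{φ(o)} ≥ Δ] ≤ Σ_{v ∈ V(G)} d_v^{h−1} 1[d_v ≥ Δ]. -/

import Mathlib

open Finset SimpleGraph
open scoped Classical

/-!
Sorting the homomorphisms `φ : P_{k+1} → G` by `φ 0` turns the left-hand side into `g ⬝ᵥ Aᵏ 1`,
where `A` is the adjacency matrix and `g = 1[d ≥ Δ]`. Since `A^(m+1) 1 = Aᵐ d` and `Aᵐ` is
symmetric, Chebyshev's inequality for the similarly ordered `g` and `d` (applied to each pair of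
endpoints together with its reversal) moves the factor `d` from the far end of the walk to its
start: `g ⬝ᵥ Aᵐ d ≤ (g d) ⬝ᵥ Aᵐ 1`. As `g d` again increases with `d`, induction on `m` gives
`g ⬝ᵥ Aᵏ 1 ≤ ∑ g d ^ k`.
-/

open Matrix

section Chebyshev

variable {ι R : Type*} [CommSemiring R] [LinearOrder R] [IsStrictOrderedRing R] [ExistsAddOfLE R]

theorem Monovary.mul_add_mul_le_mul_add_mul₀ {f g : ι → R} (hfg : Monovary f g) (i j : ι) :
    f i * g j + f j * g i ≤ f i * g i + f j * g j := by
  rcases lt_trichotomy (g i) (g j) with hij | hij | hij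
  · exact _root_.mul_add_mul_le_mul_add_mul (hfg hij) hij.le
  · rw [hij]
  · rw [add_comm (f i * g j), add_comm (f i * g i)]
    exact _root_.mul_add_mul_le_mul_add_mul (hfg hij) hij.le

theorem Monovary.dotProduct_mulVec_le [Fintype ι] {M : Matrix ι ι R} (hM : M.IsSymm)
    (hM₀ : ∀ i j, 0 ≤ M i j) {f g : ι → R} (hfg : Monovary f g) :
    f ⬝ᵥ (M *ᵥ g) ≤ (f * g) ⬝ᵥ (M *ᵥ 1) := by
  have hswap : ∀ F : ι → ι → R, ∑ i, ∑ j, M i j * F j i = ∑ i, ∑ j, M i j * F i j := by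
    intro F
    rw [Finset.sum_comm]
    exact sum_congr rfl fun i _ => sum_congr rfl fun j _ => by rw [hM.apply i j]
  have hpair : ∑ i, ∑ j, M i j * (f i * g j + f j * g i)
      ≤ ∑ i, ∑ j, M i j * (f i * g i + f j * g j) :=
    sum_le_sum fun i _ => sum_le_sum fun j _ =>
      mul_le_mul_of_nonneg_left (hfg.mul_add_mul_le_mul_add_mul₀ i j) (hM₀ i j)
  simp only [mul_add, sum_add_distrib, hswap fun i j => f i * g j,
    hswap fun i j => f i * g i] at hpair
  have hsum : ∑ i, ∑ j, M i j * (f i * g j) ≤ ∑ i, ∑ j, M i j * (f i * g i) :=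
    le_of_not_gt fun hlt => (add_lt_add hlt hlt).not_ge hpair
  convert hsum using 1 <;>
    simp only [dotProduct, mulVec, mul_sum, Pi.mul_apply, Pi.one_apply, mul_one] <;>
    refine sum_congr rfl fun i _ => sum_congr rfl fun j _ => ?_ <;>
    ring

end Chebyshev

theorem Matrix.dotProduct_pow_mulVec_one_le {ι R : Type*} [Fintype ι] [DecidableEq ι]
    [CommSemiring R] [LinearOrder R] [IsStrictOrderedRing R] [ExistsAddOfLE R]
    {A : Matrix ι ι R} (hA : A.IsSymm) (hA₀ : ∀ i j, 0 ≤ A i j) {g : ι → R} (hg₀ : 0 ≤ g)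
    (hg : Monovary g (A *ᵥ 1)) (m : ℕ) :
    g ⬝ᵥ (A ^ m *ᵥ 1) ≤ ∑ i, g i * (A *ᵥ 1) i ^ m := by
  set d := A *ᵥ 1
  have hd₀ : 0 ≤ d := fun i => sum_nonneg fun j _ => mul_nonneg (hA₀ i j) zero_le_one
  induction m generalizing g with
  | zero => simp [dotProduct]
  | succ m ih =>
    calc g ⬝ᵥ (A ^ (m + 1) *ᵥ 1) = g ⬝ᵥ (A ^ m *ᵥ d) := by rw [pow_succ, ← mulVec_mulVec]
      _ ≤ (g * d) ⬝ᵥ (A ^ m *ᵥ 1) :=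
        hg.dotProduct_mulVec_le (hA.pow m) (pow_apply_nonneg hA₀ m)
      _ ≤ ∑ i, (g * d) i * d i ^ m :=
        ih (mul_nonneg hg₀ hd₀) (hg.mul_left₀ hg₀ hd₀ (monovary_self d))
      _ = ∑ i, g i * d i ^ (m + 1) := by simp only [Pi.mul_apply, pow_succ', mul_assoc]

theorem Finset.card_filter_and_comp_eq_sum {α β : Type*} [Fintype β] [DecidableEq β]
    (s : Finset α) (f : α → β) (P : α → Prop) (p : β → Prop) [DecidablePred P] [DecidablePred p] :
    #{x ∈ s | P x ∧ p (f x)} = ∑ b, if p b then #{x ∈ s | P x ∧ f x = b} else 0 := by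
  rw [card_eq_sum_card_fiberwise (f := f) (t := univ) fun _ _ => mem_univ _]
  refine sum_congr rfl fun b _ => ?_
  rw [filter_filter]
  split_ifs with hb
  · congr 1
    exact filter_congr fun x _ => ⟨fun ⟨⟨hP, _⟩, hx⟩ => ⟨hP, hx⟩, fun ⟨hP, hx⟩ => ⟨⟨hP, hx ▸ hb⟩, hx⟩⟩
  · exact card_eq_zero.2 <| filter_eq_empty_iff.2 fun x _ ⟨⟨_, hx⟩, hxb⟩ => hb (hxb ▸ hx)

theorem Fin.card_filter_and_zero_eq_card_filter_cons {α : Type*} [Fintype α] [DecidableEq α]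
    {n : ℕ} (p : (Fin (n + 1) → α) → Prop) [DecidablePred p] (a : α) :
    #{φ | p φ ∧ φ 0 = a} = #{ψ : Fin n → α | p (Fin.cons a ψ : Fin (n + 1) → α)} := by
  refine card_nbij' Fin.tail (fun ψ => Fin.cons a ψ) ?_ ?_ ?_ ?_ <;> intro φ hφ <;>
    simp only [coe_filter, mem_univ, true_and, Set.mem_ofPred_eq] at hφ
  · obtain ⟨hp, rfl⟩ := hφ
    simpa using hp
  · simpa using hφ
  · obtain ⟨-, rfl⟩ := hφ
    exact Fin.cons_self_tail φ
  · exact Fin.tail_cons (α := fun _ => α) a φ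

namespace SimpleGraph

variable {V : Type*} (G : SimpleGraph V)

theorem pathGraph_hom_iff {n : ℕ} (φ : Fin (n + 1) → V) :
    (∀ a b, (pathGraph (n + 1)).Adj a b → G.Adj (φ a) (φ b)) ↔
      ∀ i : Fin n, G.Adj (φ i.castSucc) (φ i.succ) := by
  refine ⟨fun h i => h _ _ (pathGraph_adj.2 (Or.inl rfl)), fun h a b hab => ?_⟩
  rcases pathGraph_adj.1 hab with hab | hab
  · have := h ⟨a, by omega⟩
    rwa [show (Fin.castSucc ⟨a, _⟩ : Fin (n + 1)) = a from rfl,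
      show Fin.succ ⟨a, _⟩ = b from Fin.ext hab] at this
  · have := (h ⟨b, by omega⟩).symm
    rwa [show (Fin.castSucc ⟨b, _⟩ : Fin (n + 1)) = b from rfl,
      show Fin.succ ⟨b, _⟩ = a from Fin.ext hab] at this

theorem card_walkSeqs_from_eq_pow_mulVec_one [Fintype V] (n : ℕ) (u : V) :
    #{φ : Fin (n + 1) → V | (∀ i : Fin n, G.Adj (φ i.castSucc) (φ i.succ)) ∧ φ 0 = u} =
      (G.adjMatrix ℕ ^ n *ᵥ 1) u := by
  induction n generalizing u with
  | zero => rw [Fin.card_filter_and_zero_eq_card_filter_cons]; simp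
  | succ n ih =>
    have hcons : ∀ ψ : Fin (n + 1) → V,
        (∀ i : Fin (n + 1), G.Adj ((Fin.cons u ψ : Fin (n + 2) → V) i.castSucc)
          ((Fin.cons u ψ : Fin (n + 2) → V) i.succ)) ↔
          (∀ i : Fin n, G.Adj (ψ i.castSucc) (ψ i.succ)) ∧ G.Adj u (ψ 0) := by
      intro ψ
      simp [Fin.forall_fin_succ, and_comm]
    rw [Fin.card_filter_and_zero_eq_card_filter_cons, filter_congr fun ψ _ => hcons ψ,
      card_filter_and_comp_eq_sum, pow_succ', ← mulVec_mulVec]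
    simp only [mulVec, dotProduct, adjMatrix_apply, ite_mul, one_mul, zero_mul, ih]

end SimpleGraph

/-- Truncated Sidorenko inequality for paths: for the path `P_h` rooted at its
endpoint `o = 0`, `∑_{φ ∈ Hom(P_h,G)} 1[d_{φ(o)} ≥ Δ] ≤ ∑_v d_v^(h-1) 1[d_v ≥ Δ]`. -/
theorem truncated_sidorenko_path
    {VG : Type*} [Fintype VG] (G : SimpleGraph VG)
    (h : ℕ) (hh : 1 ≤ h) (Δ : ℕ) :
    (Finset.univ.filter
      (fun φ : Fin h → VG =>
        (∀ a b, (SimpleGraph.pathGraph h).Adj a b → G.Adj (φ a) (φ b)) ∧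
        Δ ≤ G.degree (φ ⟨0, by omega⟩))).card
      ≤ ∑ v : VG, if Δ ≤ G.degree v then (G.degree v) ^ (h - 1) else 0 := by
  obtain ⟨k, rfl⟩ : ∃ k, h = k + 1 := ⟨h - 1, by omega⟩
  set A := G.adjMatrix ℕ
  have hdeg : A *ᵥ 1 = fun v => G.degree v := funext fun v => by simp [A]
  set g : VG → ℕ := fun v => if Δ ≤ G.degree v then 1 else 0
  have hg : Monovary g (A *ᵥ 1) := by
    rw [hdeg]
    intro u v huv
    dsimp only at huv
    simp only [g]
    split_ifs <;> omega
  calc #{φ : Fin (k + 1) → VG | (∀ a b, (pathGraph (k + 1)).Adj a b → G.Adj (φ a) (φ b)) ∧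
        Δ ≤ G.degree (φ 0)}
      = g ⬝ᵥ (A ^ k *ᵥ 1) := by
        simp only [pathGraph_hom_iff]
        rw [card_filter_and_comp_eq_sum univ (fun φ : Fin (k + 1) → VG => φ 0)
          (fun φ => ∀ i : Fin k, G.Adj (φ i.castSucc) (φ i.succ)) (fun v => Δ ≤ G.degree v)]
        simp only [card_walkSeqs_from_eq_pow_mulVec_one, dotProduct, g, ite_mul, one_mul,
          zero_mul, A]
    _ ≤ ∑ v, g v * (A *ᵥ 1) v ^ k :=
        dotProduct_pow_mulVec_one_le G.isSymm_adjMatrix (fun _ _ => Nat.zero_le _)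
          (fun _ => Nat.zero_le _) hg k
    _ = ∑ v, if Δ ≤ G.degree v then G.degree v ^ (k + 1 - 1) else 0 := by
        simp [hdeg, g]
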